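/- arXiv:1610.04633 — 2 statements merged into one kernel-verified Lean document; each statement's English description precedes it below -/
import Mathlib

section
/- Let D be a degree on the ordinal S and let a, b < S be such that C(a,b) is defined. Then C(a,b) = b + ω^a if and only if C(a,b) ≥ a. -/
open Ordinal Set

noncomputable section

/-- The set of limit points of a set `X` of ordinals: the limit ordinals `c` such that
`X ∩ c` is unbounded in `c`. -/
def limPts (X : Set Ordinal) : Set Ordinal :=
  {c | Order.IsSuccLimit c ∧ ∀ b < c, ∃ x ∈ X, b < x ∧ x < c}

/-- `D` is a degree on the ordinal `S`.  For `c, a < S`, `D c a` reads "`c` has degree `a`". -/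
structure IsDegree (S : Ordinal) (D : Ordinal → Ordinal → Prop) : Prop where
  /-- every `c < S` has degree `0` -/
  deg_zero : ∀ c < S, D c 0
  /-- `0` only has degree `0` -/
  zero_only : ∀ a < S, D 0 a → a = 0
  /-- for a limit `a`, `c` has degree `a` iff it has every degree less than `a` -/
  limit : ∀ a < S, Order.IsSuccLimit a → ∀ c < S, (D c a ↔ ∀ b < a, D c b)
  /-- the successor condition -/
  succ : ∀ a, a + 1 < S →
      {c | c < S ∧ D c (a + 1)} = limPts {c | c < S ∧ D c a} ∩ {c | c < S} ∨
      ∃ d ≤ a, d < S ∧ Order.IsSuccLimit d ∧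
        {c | c < S ∧ D c (a + 1)} =
          (limPts {c | c < S ∧ D c a} ∪ {c | (c < S ∧ D c a) ∧ c ≤ d}) ∩ {c | c < S}

/-- The set of candidate values for the collapsing function `C(a,b)`: ordinals `c < S`
above `b` having some degree `a' ≥ a`. -/
def CSet (S : Ordinal) (D : Ordinal → Ordinal → Prop) (a b : Ordinal) : Set Ordinal :=
  {c | c < S ∧ b < c ∧ ∃ a', a ≤ a' ∧ a' < S ∧ D c a'}

/-- `C(a,b)` is defined iff some candidate value exists. -/
def CDefined (S : Ordinal) (D : Ordinal → Ordinal → Prop) (a b : Ordinal) : Prop :=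
  (CSet S D a b).Nonempty

/-- The collapsing function `C(a,b)`: the least element of `CSet S D a b`
(meaningful when `CDefined S D a b`). -/
def Cval (S : Ordinal) (D : Ordinal → Ordinal → Prop) (a b : Ordinal) : Ordinal :=
  sInf (CSet S D a b)

/-- `a` is maximal in `C(a,b)`: `C(a,b)` is defined and has no degree strictly greater
than `a`. -/
def CMaximal (S : Ordinal) (D : Ordinal → Ordinal → Prop) (a b : Ordinal) : Prop :=
  CDefined S D a b ∧ ∀ a', a < a' → a' < S → ¬ D (Cval S D a b) a'

/-- `b` is minimal in `C(a,b)`: `C(a,b)` is defined and `C(a,b') < C(a,b)` for every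
`b' < b`. -/
def CMinimal (S : Ordinal) (D : Ordinal → Ordinal → Prop) (a b : Ordinal) : Prop :=
  CDefined S D a b ∧ ∀ b' < b, Cval S D a b' < Cval S D a b

end

/-!
Degrees are governed by divisibility by powers of `ω`: a nonzero `c < S` divisible by `ω ^ a`
has degree `a`, and conversely every `c ≥ a` of degree `a` is divisible by `ω ^ a`. Both go by
induction on `a`; at successors the bridge is that `ω ^ (a + 1) ∣ c` exactly when `c` is closed
under `· + ω ^ a`, i.e. when `c` is a limit of multiples of `ω ^ a`, and the exceptional initial
segment `c ≤ d ≤ a` allowed by the successor clause is excluded by `c ≥ a + 1`.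
Since `b + ω ^ a` is the least multiple of `ω ^ a` above `b`, it is the least candidate for
`C(a,b)` as soon as `C(a,b) ≥ a`; conversely `b + ω ^ a ≥ ω ^ a ≥ a`.
-/

open Order

namespace Ordinal

theorem add_omega0_opow_eq_mul (b a : Ordinal) : b + ω ^ a = ω ^ a * succ (b / ω ^ a) := by
  conv_lhs => rw [← div_add_mod b (ω ^ a)]
  rw [mul_succ, add_assoc, add_omega0_opow (mod_lt b (opow_ne_zero a omega0_ne_zero))]

theorem omega0_opow_dvd_add_omega0_opow (b a : Ordinal) : ω ^ a ∣ b + ω ^ a :=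
  ⟨_, add_omega0_opow_eq_mul b a⟩

theorem add_omega0_opow_le_of_dvd {a b c : Ordinal} (hc : ω ^ a ∣ c) (hbc : b < c) :
    b + ω ^ a ≤ c := by
  obtain ⟨k, rfl⟩ := hc
  rw [add_omega0_opow_eq_mul]
  have hq : b / ω ^ a < k := (lt_mul_iff_div_lt (opow_ne_zero a omega0_ne_zero)).1 hbc
  exact mul_le_mul_right (succ_le_of_lt hq) _

theorem omega0_opow_add_one_dvd_iff {a c : Ordinal} :
    ω ^ (a + 1) ∣ c ↔ ∀ b < c, b + ω ^ a < c := by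
  refine ⟨fun hc b hbc => ?_, fun h => ?_⟩
  · exact (add_lt_add_right ((opow_lt_opow_iff_right one_lt_omega0).2 (lt_add_one a)) b).trans_le
      (add_omega0_opow_le_of_dvd hc hbc)
  have hp : ω ^ a ≠ 0 := opow_ne_zero a omega0_ne_zero
  have hc : c = ω ^ a * (c / ω ^ a) := by
    refine ((mul_div_le c _).lt_or_eq.resolve_left fun hlt => ?_).symm
    have hnext := h _ hlt
    rw [← mul_succ] at hnext
    exact hnext.not_gt (lt_mul_succ_div c hp)
  rcases mem_range_succ_or_isSuccPrelimit (c / ω ^ a) with ⟨m, hm⟩ | hq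
  · rw [← hm] at hc
    have hm_lt : ω ^ a * m < c :=
      hc ▸ (mul_lt_mul_iff_right₀ (pos_iff_ne_zero.2 hp)).2 (lt_succ m)
    have hnext := h _ hm_lt
    rw [← mul_succ, ← hc] at hnext
    exact (lt_irrefl c hnext).elim
  · obtain ⟨t, ht⟩ := isSuccPrelimit_iff_omega0_dvd.1 hq
    exact ⟨t, by rw [hc, ht, opow_add, opow_one, mul_assoc]⟩

theorem omega0_opow_dvd_of_isSuccLimit {a c : Ordinal} (ha : IsSuccLimit a)
    (h : ∀ b < a, ω ^ b ∣ c) : ω ^ a ∣ c := by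
  rw [dvd_iff_mod_eq_zero]
  by_contra hr
  obtain ⟨b, hba, hrb⟩ :=
    (lt_opow_of_isSuccLimit omega0_ne_zero ha).1 (mod_lt c (opow_ne_zero a omega0_ne_zero))
  have hbr : ω ^ b ∣ c % ω ^ a := by
    rw [← dvd_add_iff ((opow_dvd_opow ω hba.le).mul_right (c / ω ^ a)), div_add_mod]
    exact h b hba
  exact (le_of_dvd hr hbr).not_gt hrb

end Ordinal

theorem limPts_mono {X Y : Set Ordinal} (h : X ⊆ Y) : limPts X ⊆ limPts Y := by
  rintro c ⟨hc, hX⟩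
  refine ⟨hc, fun b hb => ?_⟩
  obtain ⟨x, hx, hbx, hxc⟩ := hX b hb
  exact ⟨x, h hx, hbx, hxc⟩

theorem limPts_subset_of_subset_union {X Y : Set Ordinal} (h : X ⊆ Y ∪ limPts Y) :
    limPts X ⊆ limPts Y := by
  rintro c ⟨hc, hX⟩
  refine ⟨hc, fun b hb => ?_⟩
  obtain ⟨x, hx, hbx, hxc⟩ := hX b hb
  rcases h hx with hxY | ⟨-, hY⟩
  · exact ⟨x, hxY, hbx, hxc⟩
  · obtain ⟨y, hy, hby, hyx⟩ := hY b hbx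
    exact ⟨y, hy, hby, hyx.trans hxc⟩

theorem mem_limPts_of_forall_exists {X : Set Ordinal} {c : Ordinal} (hc : c ≠ 0)
    (h : ∀ b < c, ∃ x ∈ X, b < x ∧ x < c) : c ∈ limPts X := by
  refine ⟨Ordinal.isSuccLimit_iff.2 ⟨hc, isSuccPrelimit_of_succ_lt fun b hb => ?_⟩, h⟩
  obtain ⟨x, -, hbx, hxc⟩ := h b hb
  exact (succ_le_of_lt hbx).trans_lt hxc

namespace IsDegree

variable {S : Ordinal} {D : Ordinal → Ordinal → Prop} {a b c : Ordinal}

theorem succ_of_mem_limPts (hD : IsDegree S D) (ha : a + 1 < S) (hc : c < S)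
    (h : c ∈ limPts {x | x < S ∧ D x a}) : D c (a + 1) := by
  rcases hD.succ a ha with hs | ⟨d, -, -, -, hs⟩
  · exact (show c ∈ {x | x < S ∧ D x (a + 1)} from hs ▸ ⟨h, hc⟩).2
  · exact (show c ∈ {x | x < S ∧ D x (a + 1)} from hs ▸ ⟨Or.inl h, hc⟩).2

theorem mem_limPts_of_succ (hD : IsDegree S D) (ha : a + 1 < S) (hc : c < S)
    (h : D c (a + 1)) : c ∈ limPts {x | x < S ∧ D x a} ∨ D c a ∧ c ≤ a := by
  have hc' : c ∈ {x | x < S ∧ D x (a + 1)} := ⟨hc, h⟩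
  rcases hD.succ a ha with hs | ⟨d, hda, -, -, hs⟩
  · exact Or.inl (hs ▸ hc').1
  · rcases (hs ▸ hc').1 with hl | ⟨⟨-, hca⟩, hcd⟩
    · exact Or.inl hl
    · exact Or.inr ⟨hca, hcd.trans hda⟩

theorem of_mem_limPts (hD : IsDegree S D) (ha : a < S) (hc : c < S)
    (h : c ∈ limPts {x | x < S ∧ D x a}) : D c a := by
  induction a using Ordinal.limitRecOn generalizing c with
  | zero => exact hD.deg_zero c hc
  | add_one a _ =>
    refine hD.succ_of_mem_limPts ha hc (limPts_subset_of_subset_union (fun x hx => ?_) h)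
    obtain ⟨hx, hxa⟩ := hx
    rcases hD.mem_limPts_of_succ ha hx hxa with hl | ⟨hxa', -⟩
    · exact Or.inr hl
    · exact Or.inl ⟨hx, hxa'⟩
  | limit a hal ih =>
    refine (hD.limit a ha hal c hc).2 fun b hb => ih b hb (hb.trans ha) hc (limPts_mono ?_ h)
    exact fun x hx => ⟨hx.1, (hD.limit a ha hal x hx.1).1 hx.2 b hb⟩

theorem of_succ (hD : IsDegree S D) (ha : a + 1 < S) (hc : c < S) (h : D c (a + 1)) :
    D c a := by
  rcases hD.mem_limPts_of_succ ha hc h with hl | ⟨hca, -⟩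
  · exact hD.of_mem_limPts ((lt_add_one a).trans ha) hc hl
  · exact hca

theorem of_le (hD : IsDegree S D) (ha : a < S) (hc : c < S) (h : D c a) (hba : b ≤ a) :
    D c b := by
  induction a using Ordinal.limitRecOn with
  | zero => rwa [nonpos_iff_eq_zero.1 hba]
  | add_one a ih =>
    rcases hba.lt_or_eq with hba | rfl
    · exact ih ((lt_add_one a).trans ha) (hD.of_succ ha hc h) (lt_add_one_iff.1 hba)
    · exact h
  | limit a hal _ =>
    rcases hba.lt_or_eq with hba | rfl
    · exact (hD.limit a ha hal c hc).1 h b hba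
    · exact h

theorem of_omega0_opow_dvd (hD : IsDegree S D) (ha : a < S) (hc : c < S) (hc0 : c ≠ 0)
    (h : ω ^ a ∣ c) : D c a := by
  induction a using Ordinal.limitRecOn generalizing c with
  | zero => exact hD.deg_zero c hc
  | add_one a ih =>
    refine hD.succ_of_mem_limPts ha hc (mem_limPts_of_forall_exists hc0 fun b hb => ?_)
    have hbc := Ordinal.omega0_opow_add_one_dvd_iff.1 h b hb
    refine ⟨b + ω ^ a, ⟨hbc.trans hc, ?_⟩,
      lt_add_of_pos_right b (opow_pos a omega0_pos), hbc⟩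
    exact ih ((lt_add_one a).trans ha) (hbc.trans hc)
      ((opow_pos a omega0_pos).trans_le le_add_self).ne'
      (Ordinal.omega0_opow_dvd_add_omega0_opow b a)
  | limit a hal ih =>
    exact (hD.limit a ha hal c hc).2 fun b hb =>
      ih b hb (hb.trans ha) hc hc0 ((opow_dvd_opow ω hb.le).trans h)

theorem omega0_opow_dvd (hD : IsDegree S D) (hc : c < S) (hac : a ≤ c) (h : D c a) :
    ω ^ a ∣ c := by
  induction a using Ordinal.limitRecOn generalizing c with
  | zero => simp
  | add_one a ih =>
    have hac' : a < c := (lt_add_one a).trans_le hac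
    rcases hD.mem_limPts_of_succ (hac.trans_lt hc) hc h with ⟨-, hl⟩ | ⟨-, hca⟩
    · refine Ordinal.omega0_opow_add_one_dvd_iff.2 fun b hb => ?_
      obtain ⟨x, ⟨hx, hxa⟩, hbx, hxc⟩ := hl (max b a) (max_lt hb hac')
      have hax : a < x := (le_max_right b a).trans_lt hbx
      exact (Ordinal.add_omega0_opow_le_of_dvd (ih hx hax.le hxa)
        ((le_max_left b a).trans_lt hbx)).trans_lt hxc
    · exact absurd hca hac'.not_ge
  | limit a hal ih =>
    have ha : a < S := hac.trans_lt hc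
    exact Ordinal.omega0_opow_dvd_of_isSuccLimit hal fun b hb =>
      ih b hb hc (hb.le.trans hac) ((hD.limit a ha hal c hc).1 h b hb)

end IsDegree

theorem Cval_eq_add_omega_pow_iff_general (S : Ordinal) (D : Ordinal → Ordinal → Prop)
    (hD : IsDegree S D) (a b : Ordinal)
    (h : CDefined S D a b) :
    Cval S D a b = b + omega0 ^ a ↔ a ≤ Cval S D a b := by
  obtain ⟨hCS, hbC, a', haa', ha'S, hDa'⟩ := csInf_mem h
  refine ⟨fun heq => heq ▸ (right_le_opow a one_lt_omega0).trans le_add_self, fun haC => ?_⟩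
  have ha : a < S := haa'.trans_lt ha'S
  have hle : b + ω ^ a ≤ Cval S D a b :=
    Ordinal.add_omega0_opow_le_of_dvd (hD.omega0_opow_dvd hCS haC (hD.of_le ha'S hCS hDa' haa')) hbC
  have hlt : b + ω ^ a < S := hle.trans_lt hCS
  have hmem : b + ω ^ a ∈ CSet S D a b :=
    ⟨hlt, lt_add_of_pos_right b (opow_pos a omega0_pos), a, le_rfl, ha,
      hD.of_omega0_opow_dvd ha hlt ((opow_pos a omega0_pos).trans_le le_add_self).ne'
        (Ordinal.omega0_opow_dvd_add_omega0_opow b a)⟩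
  exact (csInf_le' hmem).antisymm hle

theorem Cval_eq_add_omega_pow_iff (S : Ordinal) (D : Ordinal → Ordinal → Prop)
    (hD : IsDegree S D) (a b : Ordinal) (ha : a < S) (hb : b < S)
    (h : CDefined S D a b) :
    Cval S D a b = b + omega0 ^ a ↔ a ≤ Cval S D a b :=
  Cval_eq_add_omega_pow_iff_general S D hD a b h
end

section
/- Let D be a degree on the ordinal S. If a is maximal in C(a,b) and C(c,d) is defined, then C(a,b) < C(c,d) if and only if C(a,b) ≤ d, or both b < C(c,d) and a < c. (Here c need not be maximal in C(c,d).) -/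
/-!
Both sides are comparisons of least candidates. A candidate for `C(c,d)` lying above `b` is a
candidate for `C(a,b)` as soon as `a ≤ c`; and maximality of `a` says exactly that `C(a,b)` is a
candidate for no `C(c,d)` with `a < c`, which rules out `C(a,b) = C(c,d)` in that case.
-/

open Ordinal Set

section Collapsing

variable {S : Ordinal} {D : Ordinal → Ordinal → Prop} {a b c d x : Ordinal}

theorem Cval_mem_CSet (h : CDefined S D a b) : Cval S D a b ∈ CSet S D a b :=
  csInf_mem h

theorem Cval_le_of_mem_CSet (hx : x ∈ CSet S D a b) : Cval S D a b ≤ x :=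
  csInf_le' hx

theorem lt_Cval (h : CDefined S D a b) : b < Cval S D a b :=
  (Cval_mem_CSet h).2.1

theorem mem_CSet_of_le_of_lt (hx : x ∈ CSet S D a b) (hca : c ≤ a) (hdx : d < x) :
    x ∈ CSet S D c d := by
  obtain ⟨hxS, -, a', haa', ha'S, hDx⟩ := hx
  exact ⟨hxS, hdx, a', hca.trans haa', ha'S, hDx⟩

theorem CMaximal.Cval_not_mem_CSet (hmax : CMaximal S D a b) (hac : a < c) :
    Cval S D a b ∉ CSet S D c d := by
  rintro ⟨-, -, c', hcc', hc'S, hDc'⟩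
  exact hmax.2 c' (hac.trans_le hcc') hc'S hDc'

end Collapsing

theorem Cval_lt_iff_general (S : Ordinal) (D : Ordinal → Ordinal → Prop)
    (a b c d : Ordinal) (hmax : CMaximal S D a b)
    (h : CDefined S D c d) :
    Cval S D a b < Cval S D c d ↔
      Cval S D a b ≤ d ∨ (b < Cval S D c d ∧ a < c) := by
  have hab := Cval_mem_CSet hmax.1
  have hcd := Cval_mem_CSet h
  constructor
  · intro hlt
    refine (le_or_gt (Cval S D a b) d).imp id fun hdx => ⟨(lt_Cval hmax.1).trans hlt, ?_⟩
    by_contra! hca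
    exact (Cval_le_of_mem_CSet (mem_CSet_of_le_of_lt hab hca hdx)).not_gt hlt
  · rintro (hle | ⟨hby, hac⟩)
    · exact hle.trans_lt (lt_Cval h)
    · have hle := Cval_le_of_mem_CSet (mem_CSet_of_le_of_lt hcd hac.le hby)
      exact hle.lt_of_ne fun heq => hmax.Cval_not_mem_CSet hac (heq ▸ hcd)

theorem Cval_lt_iff (S : Ordinal) (D : Ordinal → Ordinal → Prop)
    (hD : IsDegree S D) (a b c d : Ordinal) (hmax : CMaximal S D a b)
    (h : CDefined S D c d) :
    Cval S D a b < Cval S D c d ↔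
      Cval S D a b ≤ d ∨ (b < Cval S D c d ∧ a < c) :=
  Cval_lt_iff_general S D a b c d hmax h
end
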